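/- If H is a partial cube and E_f is a Θ-class of H, then the graph H/E_f obtained from H by contracting all edges of E_f is a partial cube (called a contraction of H), and H is an expansion of H/E_f. -/

import Mathlib

/-!
Fix an isometric embedding `φ` of `H` into `Q_d`. Edges of `H` are the pairs at Hamming distance
one, and two of them are `Θ`-related exactly when they flip the same coordinate, so `E_f` is the
set of edges flipping one coordinate `i`. Contracting `E_f` identifies precisely the vertices that
agree off `i`, so dropping coordinate `i` embeds `H/E_f` injectively into the cube; following a
geodesic of `H`, the contracted edges cost nothing and every other edge lowers the distance of the
dropped coordinates by one, which makes this embedding isometric. The same walk stays inside a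
halfspace `{φ · i = b}` when its ends do, so the images of the two halfspaces are isometric
subgraphs; they cover `H/E_f`, meet in the images of the edges of `E_f`, and `H` is their expansion.
-/

open SimpleGraph

/-- The hypercube graph `Q_d` on `{0,1}^d`: two vertices are adjacent iff they
differ in exactly one coordinate. -/
def hypercubeGraph (d : ℕ) : SimpleGraph (Fin d → Bool) where
  Adj x y := hammingDist x y = 1
  symm := by
    constructor
    intro x y h
    rwa [hammingDist_comm]
  loopless := by
    constructor
    intro x h
    simp [hammingDist_self] at h

/-- A partial cube: a connected simple graph admitting an isometric embedding
into some hypercube. -/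
def IsPartialCube {V : Type} (G : SimpleGraph V) : Prop :=
  G.Connected ∧
    ∃ (d : ℕ) (φ : V → (Fin d → Bool)), Function.Injective φ ∧
      ∀ v w : V, (hypercubeGraph d).dist (φ v) (φ w) = G.dist v w

/-- A subgraph is isometric if distances within it coincide with distances in
the ambient graph. -/
def IsIsometricSubgraph {V : Type} {G : SimpleGraph V} (G' : G.Subgraph) : Prop :=
  ∀ u v : G'.verts, G'.coe.dist u v = G.dist u.val v.val

/-- The expansion graph of `G` with respect to two subgraphs `G₁, G₂`: take
disjoint copies of `G₁` and `G₂` and join the two copies of each vertex of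
`G₁ ∩ G₂` by a matching edge. -/
def expansionGraph {V : Type} {G : SimpleGraph V} (G₁ G₂ : G.Subgraph) :
    SimpleGraph (↥G₁.verts ⊕ ↥G₂.verts) where
  Adj a b :=
    match a, b with
    | Sum.inl u, Sum.inl v => G₁.Adj u v
    | Sum.inr u, Sum.inr v => G₂.Adj u v
    | Sum.inl u, Sum.inr v => (u : V) = (v : V)
    | Sum.inr u, Sum.inl v => (u : V) = (v : V)
  symm := by
    constructor
    rintro (u | u) (v | v) h
    · exact G₁.adj_symm h
    · exact h.symm
    · exact h.symm
    · exact G₂.adj_symm h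
  loopless := by
    constructor
    rintro (u | u) h
    · exact G.irrefl (G₁.adj_sub h)
    · exact G.irrefl (G₂.adj_sub h)

/-- `H` is the expansion of `G` with respect to the subgraphs `G₁` and `G₂`:
they are isometric, cover `G` (vertices and edges), have non-empty
intersection, and `H` is isomorphic to the resulting expansion graph. -/
structure IsExpansionWrt {V W : Type} (H : SimpleGraph W) (G : SimpleGraph V)
    (G₁ G₂ : G.Subgraph) : Prop where
  isometric₁ : IsIsometricSubgraph G₁
  isometric₂ : IsIsometricSubgraph G₂
  covers : G₁ ⊔ G₂ = ⊤
  inter_nonempty : (G₁.verts ∩ G₂.verts).Nonempty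
  iso : Nonempty (H ≃g expansionGraph G₁ G₂)

/-- `H` is an expansion of `G` (with respect to some admissible pair of
subgraphs). -/
def IsExpansionOf {V W : Type} (H : SimpleGraph W) (G : SimpleGraph V) : Prop :=
  ∃ G₁ G₂ : G.Subgraph, IsExpansionWrt H G G₁ G₂

/-- The Djoković–Winkler relation `Θ` on (unordered) edges: `e = xy` and
`f = uv` are related iff `d(x,u) + d(y,v) ≠ d(x,v) + d(y,u)`. -/
def DWRel {V : Type} (G : SimpleGraph V) (e f : Sym2 V) : Prop :=
  ∃ x y u v : V, e = s(x, y) ∧ f = s(u, v) ∧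
    G.dist x u + G.dist y v ≠ G.dist x v + G.dist y u

/-- A `Θ`-class of `G`: the set of all edges of `G` related to some fixed edge
`e` of `G` by the Djoković–Winkler relation. -/
def IsThetaClass {V : Type} (G : SimpleGraph V) (C : Set (Sym2 V)) : Prop :=
  ∃ e ∈ G.edgeSet, C = {f | f ∈ G.edgeSet ∧ DWRel G e f}

/-- The graph obtained from `H` by contracting (identifying the two endpoints
of) every edge in `C`. -/
def contractEdges {V : Type} (H : SimpleGraph V) (C : Set (Sym2 V)) :
    SimpleGraph (Quot fun v w : V => s(v, w) ∈ C) :=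
  SimpleGraph.fromRel fun a b =>
    ∃ v w : V, a = Quot.mk _ v ∧ b = Quot.mk _ w ∧ H.Adj v w

open Function

section Hamming

variable {d : ℕ}

def dropCoord (i : Fin d) (x : Fin d → Bool) : Fin d → Bool := update x i false

theorem hammingDist_eq_dropCoord_add (i : Fin d) (x y : Fin d → Bool) :
    hammingDist x y = hammingDist (dropCoord i x) (dropCoord i y) + if x i = y i then 0 else 1 := by
  have split (z w : Fin d → Bool) : hammingDist z w =
      (if z i = w i then 0 else 1) + ∑ k ∈ {i}ᶜ, if z k = w k then 0 else 1 := by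
    rw [hammingDist, Finset.card_filter, Fintype.sum_eq_add_sum_compl i]
    simp only [ne_eq, ite_not]
  have rest : (∑ k ∈ {i}ᶜ, if dropCoord i x k = dropCoord i y k then 0 else 1) =
      ∑ k ∈ {i}ᶜ, if x k = y k then 0 else 1 :=
    Finset.sum_congr rfl fun k hk => by
      simp only [dropCoord, update_of_ne (by simpa using hk : k ≠ i)]
  rw [split x, split (dropCoord i x), rest, add_comm]
  simp [dropCoord]

theorem hammingDist_dropCoord_le (i : Fin d) (x y : Fin d → Bool) :
    hammingDist (dropCoord i x) (dropCoord i y) ≤ hammingDist x y := by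
  rw [hammingDist_eq_dropCoord_add i x y]
  exact Nat.le_add_right _ _

theorem dropCoord_eq_iff_of_hammingDist_eq_one {x y : Fin d → Bool} (h : hammingDist x y = 1)
    (i : Fin d) : dropCoord i x = dropCoord i y ↔ x i ≠ y i := by
  rw [hammingDist_eq_dropCoord_add i] at h
  rw [← hammingDist_eq_zero]
  split_ifs at h with hi <;> simp only [hi, ne_eq, not_true_eq_false, not_false_eq_true,
    iff_false, iff_true] <;> omega

theorem exists_dropCoord_eq_of_hammingDist_eq_one {x y : Fin d → Bool}
    (h : hammingDist x y = 1) : ∃ i, x i ≠ y i ∧ dropCoord i x = dropCoord i y := by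
  obtain ⟨i, hi⟩ : ∃ i, x i ≠ y i := by
    by_contra! hxy
    simp [funext hxy] at h
  exact ⟨i, hi, (dropCoord_eq_iff_of_hammingDist_eq_one h i).2 hi⟩

theorem hammingDist_update_add_one {x y : Fin d → Bool} {j : Fin d} (h : x j ≠ y j) :
    hammingDist (update x j (y j)) y + 1 = hammingDist x y := by
  rw [hammingDist_eq_dropCoord_add j x, hammingDist_eq_dropCoord_add j (update x j (y j))]
  simp [dropCoord, h]

theorem hammingDist_update_eq_one {x : Fin d → Bool} {j : Fin d} {b : Bool} (h : x j ≠ b) :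
    hammingDist x (update x j b) = 1 := by
  rw [hammingDist_eq_dropCoord_add j]
  simp [dropCoord, h]

/-- The Djoković–Winkler relation read in the cube. -/
theorem hammingDist_add_ne_iff {x y : Fin d → Bool} {i : Fin d} (hi : x i ≠ y i)
    (hxy : dropCoord i x = dropCoord i y) (u v : Fin d → Bool) :
    hammingDist x u + hammingDist y v ≠ hammingDist x v + hammingDist y u ↔ u i ≠ v i := by
  rw [hammingDist_eq_dropCoord_add i x u, hammingDist_eq_dropCoord_add i y v,
    hammingDist_eq_dropCoord_add i x v, hammingDist_eq_dropCoord_add i y u, hxy]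
  revert hi
  generalize x i = a; generalize y i = b; generalize u i = c; generalize v i = e
  cases a <;> cases b <;> cases c <;> cases e <;>
    simp only [ne_eq, not_true_eq_false, not_false_eq_true, Bool.false_eq_true, Bool.true_eq_false,
      ↓reduceIte, add_zero, iff_true, iff_false, Decidable.not_not, IsEmpty.forall_iff,
      forall_const] <;> omega

end Hamming

namespace SimpleGraph

variable {V : Type} {G : SimpleGraph V} {d : ℕ}

theorem hammingDist_le_length (f : V → Fin d → Bool)
    (hf : ∀ a b, G.Adj a b → hammingDist (f a) (f b) ≤ 1) {a b : V} (w : G.Walk a b) :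
    hammingDist (f a) (f b) ≤ w.length := by
  induction w with
  | nil => simp
  | @cons a c b h w ih =>
    calc hammingDist (f a) (f b) ≤ hammingDist (f a) (f c) + hammingDist (f c) (f b) :=
          hammingDist_triangle _ _ _
      _ ≤ w.length + 1 := by have := hf a c h; omega
      _ = (Walk.cons h w).length := (Walk.length_cons h w).symm

theorem dist_eq_hammingDist_of_walk (f : V → Fin d → Bool)
    (hf : ∀ a b, G.Adj a b → hammingDist (f a) (f b) ≤ 1) {a b : V} (w : G.Walk a b)
    (hw : w.length ≤ hammingDist (f a) (f b)) : G.dist a b = hammingDist (f a) (f b) := by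
  obtain ⟨p, hp⟩ := Reachable.exists_walk_length_eq_dist ⟨w⟩
  exact le_antisymm ((dist_le w).trans hw) (hp ▸ hammingDist_le_length f hf p)

theorem exists_adj_dist_eq_of_dist_eq_add_one {n : ℕ} {v w : V} (h : G.dist v w = n + 1) :
    ∃ v', G.Adj v v' ∧ G.dist v' w = n := by
  obtain ⟨p, hp⟩ :=
    (Reachable.of_dist_ne_zero (by omega : G.dist v w ≠ 0)).exists_walk_length_eq_dist
  cases p with
  | nil => simp at h
  | cons hadj p =>
    refine ⟨_, hadj, le_antisymm ?_ ?_⟩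
    · have := dist_le p
      simp only [Walk.length_cons] at hp
      omega
    · have := hadj.reachable.dist_triangle_left w
      rw [dist_eq_one_iff_adj.2 hadj] at this
      omega

end SimpleGraph

theorem hypercubeGraph_dist {d : ℕ} (x y : Fin d → Bool) :
    (hypercubeGraph d).dist x y = hammingDist x y := by
  suffices ∀ n x y, hammingDist x y = n → ∃ w : (hypercubeGraph d).Walk x y, w.length = n by
    obtain ⟨w, hw⟩ := this _ x y rfl
    exact dist_eq_hammingDist_of_walk id (fun _ _ h => Nat.le_of_eq h) w hw.le
  intro n
  induction n with
  | zero =>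
    intro x y h
    obtain rfl := hammingDist_eq_zero.1 h
    exact ⟨.nil, rfl⟩
  | succ n ih =>
    intro x y h
    obtain ⟨j, hj⟩ : ∃ j, x j ≠ y j := by
      by_contra! hxy
      simp [funext hxy] at h
    obtain ⟨w, hw⟩ := ih (update x j (y j)) y (by have := hammingDist_update_add_one hj; omega)
    have hadj : (hypercubeGraph d).Adj x (update x j (y j)) := hammingDist_update_eq_one hj
    exact ⟨.cons hadj w, by simp [hw]⟩

section Expansion

variable {V : Type} {G : SimpleGraph V} (G₁ G₂ : G.Subgraph)

@[simp]
theorem expansionGraph_adj_inl_inl (u v : G₁.verts) :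
    (expansionGraph G₁ G₂).Adj (.inl u) (.inl v) ↔ G₁.Adj u v := Iff.rfl

@[simp]
theorem expansionGraph_adj_inr_inr (u v : G₂.verts) :
    (expansionGraph G₁ G₂).Adj (.inr u) (.inr v) ↔ G₂.Adj u v := Iff.rfl

@[simp]
theorem expansionGraph_adj_inl_inr (u : G₁.verts) (v : G₂.verts) :
    (expansionGraph G₁ G₂).Adj (.inl u) (.inr v) ↔ (u : V) = v := Iff.rfl

@[simp]
theorem expansionGraph_adj_inr_inl (u : G₂.verts) (v : G₁.verts) :
    (expansionGraph G₁ G₂).Adj (.inr u) (.inl v) ↔ (u : V) = v := Iff.rfl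

end Expansion

section PartialCube

variable {V : Type} {H : SimpleGraph V} {d : ℕ} {φ : V → Fin d → Bool}

theorem dwRel_mk_iff {x y u v : V} :
    DWRel H s(x, y) s(u, v) ↔ H.dist x u + H.dist y v ≠ H.dist x v + H.dist y u := by
  refine ⟨?_, fun h => ⟨x, y, u, v, rfl, rfl, h⟩⟩
  rintro ⟨x', y', u', v', he, hf, hne⟩
  rcases Sym2.eq_iff.1 he with ⟨rfl, rfl⟩ | ⟨rfl, rfl⟩ <;>
    rcases Sym2.eq_iff.1 hf with ⟨rfl, rfl⟩ | ⟨rfl, rfl⟩ <;> omega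

theorem adj_iff_hammingDist_eq_one (hφ : ∀ v w, hammingDist (φ v) (φ w) = H.dist v w)
    {v w : V} : H.Adj v w ↔ hammingDist (φ v) (φ w) = 1 := by
  rw [hφ, dist_eq_one_iff_adj]

theorem IsThetaClass.exists_coord {C : Set (Sym2 V)}
    (hφ : ∀ v w, hammingDist (φ v) (φ w) = H.dist v w) (hC : IsThetaClass H C) :
    ∃ i x y, H.Adj x y ∧ φ x i ≠ φ y i ∧ ∀ u v, s(u, v) ∈ C ↔ H.Adj u v ∧ φ u i ≠ φ v i := by
  obtain ⟨e, he, rfl⟩ := hC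
  induction e using Sym2.ind with
  | _ x y =>
  have hxy : H.Adj x y := he
  obtain ⟨i, hi, hdrop⟩ :=
    exists_dropCoord_eq_of_hammingDist_eq_one ((adj_iff_hammingDist_eq_one hφ).1 hxy)
  refine ⟨i, x, y, hxy, hi, fun u v => ?_⟩
  simp only [Set.mem_ofPred_eq, mem_edgeSet, dwRel_mk_iff, ← hφ, hammingDist_add_ne_iff hi hdrop]

theorem coord_eq_of_adj_of_dist_add_one (hφ : ∀ v w, hammingDist (φ v) (φ w) = H.dist v w)
    {i : Fin d} {v v' w : V} (hadj : H.Adj v v') (hdist : H.dist v' w + 1 = H.dist v w)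
    (hvw : φ v i = φ w i) : φ v' i = φ v i := by
  by_contra hne
  have hdrop := (dropCoord_eq_iff_of_hammingDist_eq_one
    ((adj_iff_hammingDist_eq_one hφ).1 hadj) i).2 (Ne.symm hne)
  have h₁ := hammingDist_eq_dropCoord_add i (φ v) (φ w)
  have h₂ := hammingDist_eq_dropCoord_add i (φ v') (φ w)
  rw [hφ, if_pos hvw] at h₁
  rw [hφ, ← hdrop, if_neg (hvw ▸ hne)] at h₂
  omega

end PartialCube

section Contraction

variable {V : Type} {H : SimpleGraph V} {C : Set (Sym2 V)}

theorem contractEdges_adj {a b : Quot fun v w : V => s(v, w) ∈ C} :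
    (contractEdges H C).Adj a b ↔
      a ≠ b ∧ ∃ v w, a = Quot.mk _ v ∧ b = Quot.mk _ w ∧ H.Adj v w := by
  rw [contractEdges, fromRel_adj]
  refine and_congr_right fun _ => ⟨?_, Or.inl⟩
  rintro (h | ⟨v, w, rfl, rfl, hvw⟩)
  · exact h
  · exact ⟨w, v, rfl, rfl, hvw.symm⟩

def contractImage (H : SimpleGraph V) (C : Set (Sym2 V)) (U : Set V) :
    (contractEdges H C).Subgraph :=
  (⊤ : (contractEdges H C).Subgraph).induce (Quot.mk _ '' U)

theorem contractImage_adj_mk_iff {U : Set V} {v w : V} (hv : v ∈ U) (hw : w ∈ U) :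
    (contractImage H C U).Adj (Quot.mk _ v) (Quot.mk _ w) ↔
      (contractEdges H C).Adj (Quot.mk _ v) (Quot.mk _ w) :=
  ⟨fun h => h.2.2, fun h => ⟨⟨v, hv, rfl⟩, ⟨w, hw, rfl⟩, h⟩⟩

/-- `C` is the `Θ`-class of the connected graph `H` cut out by coordinate `i` of the isometric
cube embedding `φ`. -/
structure IsCoordClass {d : ℕ} (H : SimpleGraph V) (φ : V → Fin d → Bool) (i : Fin d)
    (C : Set (Sym2 V)) : Prop where
  connected : H.Connected
  hammingDist_eq : ∀ v w, hammingDist (φ v) (φ w) = H.dist v w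
  mem_iff : ∀ u v, s(u, v) ∈ C ↔ H.Adj u v ∧ φ u i ≠ φ v i

theorem contractImage_sup_compl {d : ℕ} {φ : V → Fin d → Bool} {i : Fin d}
    (hC : ∀ u v, s(u, v) ∈ C ↔ H.Adj u v ∧ φ u i ≠ φ v i) :
    contractImage H C {v | φ v i = false} ⊔ contractImage H C {v | φ v i = false}ᶜ = ⊤ := by
  refine Subgraph.ext ?_ ?_
  · ext ⟨v⟩
    simp [contractImage]
  · ext a b
    simp only [contractImage, Subgraph.sup_adj, Subgraph.induce_adj, Subgraph.top_adj]
    refine ⟨by rintro (⟨-, -, h⟩ | ⟨-, -, h⟩) <;> exact h, fun h => ?_⟩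
    obtain ⟨hne, v, w, rfl, rfl, hvw⟩ := contractEdges_adj.1 h
    have hi : φ v i = φ w i := by
      by_contra hi
      exact hne (Quot.sound ((hC v w).2 ⟨hvw, hi⟩))
    by_cases hv : φ v i = false
    · exact Or.inl ⟨⟨v, hv, rfl⟩, ⟨w, hi.symm.trans hv, rfl⟩, h⟩
    · exact Or.inr ⟨⟨v, hv, rfl⟩, ⟨w, fun hw => hv (hi.trans hw), rfl⟩, h⟩

theorem hammingDist_le_one_of_contractEdges_adj
    {d : ℕ} {φ : V → Fin d → Bool} {i : Fin d}
    (hφ : ∀ v w, hammingDist (φ v) (φ w) = H.dist v w)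
    {ψ : (Quot fun v w : V => s(v, w) ∈ C) → Fin d → Bool}
    (hψ : ∀ v, ψ (Quot.mk _ v) = dropCoord i (φ v)) {a b : Quot fun v w : V => s(v, w) ∈ C}
    (h : (contractEdges H C).Adj a b) : hammingDist (ψ a) (ψ b) ≤ 1 := by
  obtain ⟨-, v, w, rfl, rfl, hvw⟩ := contractEdges_adj.1 h
  rw [hψ, hψ, ← (adj_iff_hammingDist_eq_one hφ).1 hvw]
  exact hammingDist_dropCoord_le i _ _

namespace IsCoordClass

variable {d : ℕ} {φ : V → Fin d → Bool} {i : Fin d}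

theorem dropCoord_eq_of_mem (h : IsCoordClass H φ i C) {v w : V} (hvw : s(v, w) ∈ C) :
    dropCoord i (φ v) = dropCoord i (φ w) :=
  have ⟨hadj, hi⟩ := (h.mem_iff v w).1 hvw
  (dropCoord_eq_iff_of_hammingDist_eq_one
    ((adj_iff_hammingDist_eq_one h.hammingDist_eq).1 hadj) i).2 hi

theorem mk_eq_mk_iff (h : IsCoordClass H φ i C) {v w : V} :
    (Quot.mk _ v : Quot fun v w : V => s(v, w) ∈ C) = Quot.mk _ w ↔
      dropCoord i (φ v) = dropCoord i (φ w) := by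
  refine ⟨fun hvw => congrArg (Quot.lift (fun u => dropCoord i (φ u)) fun _ _ =>
    h.dropCoord_eq_of_mem) hvw, fun hvw => ?_⟩
  have hsplit := hammingDist_eq_dropCoord_add i (φ v) (φ w)
  rw [hvw, hammingDist_self, zero_add, h.hammingDist_eq] at hsplit
  by_cases hi : φ v i = φ w i
  · rw [if_pos hi, h.connected.dist_eq_zero_iff] at hsplit
    rw [hsplit]
  · rw [if_neg hi, dist_eq_one_iff_adj] at hsplit
    exact Quot.sound ((h.mem_iff v w).2 ⟨hsplit, hi⟩)

theorem exists_injective_coords (h : IsCoordClass H φ i C) :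
    ∃ ψ : (Quot fun v w : V => s(v, w) ∈ C) → Fin d → Bool,
      Function.Injective ψ ∧ ∀ v, ψ (Quot.mk _ v) = dropCoord i (φ v) := by
  refine ⟨Quot.lift (fun u => dropCoord i (φ u)) fun _ _ => h.dropCoord_eq_of_mem, ?_,
    fun _ => rfl⟩
  rintro ⟨v⟩ ⟨w⟩ hvw
  exact h.mk_eq_mk_iff.2 hvw


theorem contractEdges_adj_mk_iff (h : IsCoordClass H φ i C) {v w : V} (hvw : φ v i = φ w i) :
    (contractEdges H C).Adj (Quot.mk _ v) (Quot.mk _ w) ↔ H.Adj v w := by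
  have hφ := h.hammingDist_eq
  refine ⟨fun hadj => ?_, fun hadj => contractEdges_adj.2 ⟨?_, v, w, rfl, rfl, hadj⟩⟩
  · obtain ⟨ψ, -, hψ⟩ := h.exists_injective_coords
    have hle := hammingDist_le_one_of_contractEdges_adj hφ hψ hadj
    have hpos := hammingDist_pos.2 (h.mk_eq_mk_iff.not.1 hadj.ne)
    rw [hψ, hψ] at hle
    rw [adj_iff_hammingDist_eq_one hφ, hammingDist_eq_dropCoord_add i, if_pos hvw]
    omega
  · rw [Ne, h.mk_eq_mk_iff,
      dropCoord_eq_iff_of_hammingDist_eq_one ((adj_iff_hammingDist_eq_one hφ).1 hadj), not_not]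
    exact hvw

theorem mk_eq_mk_iff_adj (h : IsCoordClass H φ i C) {v w : V} (hvw : φ v i ≠ φ w i) :
    (Quot.mk _ v : Quot fun v w : V => s(v, w) ∈ C) = Quot.mk _ w ↔ H.Adj v w := by
  rw [h.mk_eq_mk_iff, adj_iff_hammingDist_eq_one h.hammingDist_eq,
    hammingDist_eq_dropCoord_add i, if_neg hvw, ← hammingDist_eq_zero]
  simp

theorem injOn_mk (h : IsCoordClass H φ i C) (b : Bool) :
    Set.InjOn (Quot.mk fun v w : V => s(v, w) ∈ C) {v | φ v i = b} := by
  intro v hv w hw hvw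
  have hsplit := hammingDist_eq_dropCoord_add i (φ v) (φ w)
  rw [h.mk_eq_mk_iff.1 hvw, hammingDist_self, if_pos (hv.trans hw.symm), h.hammingDist_eq]
    at hsplit
  exact h.connected.dist_eq_zero_iff.1 hsplit

theorem exists_walk_contractImage (h : IsCoordClass H φ i C) {U : Set V}
    (hU : ∀ v w v', v ∈ U → w ∈ U → H.Adj v v' → H.dist v' w + 1 = H.dist v w → v' ∈ U)
    {v w : V} (hv : v ∈ U) (hw : w ∈ U) :
    ∃ W : (contractImage H C U).coe.Walk ⟨_, v, hv, rfl⟩ ⟨_, w, hw, rfl⟩,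
      W.length ≤ hammingDist (dropCoord i (φ v)) (dropCoord i (φ w)) := by
  induction hn : H.dist v w generalizing v with
  | zero =>
    obtain rfl := h.connected.dist_eq_zero_iff.1 hn
    exact ⟨.nil, by simp⟩
  | succ n ih =>
    obtain ⟨v', hadj, hdist⟩ := exists_adj_dist_eq_of_dist_eq_add_one hn
    have hv' := hU v w v' hv hw hadj (by omega)
    obtain ⟨W, hW⟩ := ih hv' hdist
    by_cases hi : φ v i = φ v' i
    · have hstep : (contractImage H C U).coe.Adj ⟨_, v, hv, rfl⟩ ⟨_, v', hv', rfl⟩ :=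
        (contractImage_adj_mk_iff hv hv').2 ((h.contractEdges_adj_mk_iff hi).2 hadj)
      refine ⟨.cons hstep W, ?_⟩
      have h₁ := hammingDist_eq_dropCoord_add i (φ v) (φ w)
      have h₂ := hammingDist_eq_dropCoord_add i (φ v') (φ w)
      rw [h.hammingDist_eq, hn] at h₁
      rw [h.hammingDist_eq, hdist, ← hi] at h₂
      simp only [Walk.length_cons]
      omega
    · have hmk : (Quot.mk _ v : Quot fun v w : V => s(v, w) ∈ C) = Quot.mk _ v' :=
        Quot.sound ((h.mem_iff v v').2 ⟨hadj, hi⟩)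
      refine ⟨W.copy (Subtype.ext hmk.symm) rfl, ?_⟩
      rwa [Walk.length_copy, h.mk_eq_mk_iff.1 hmk]

theorem exists_walk_contractEdges (h : IsCoordClass H φ i C) (v w : V) :
    ∃ W : (contractEdges H C).Walk (Quot.mk _ v) (Quot.mk _ w),
      W.length ≤ hammingDist (dropCoord i (φ v)) (dropCoord i (φ w)) := by
  obtain ⟨W, hW⟩ := h.exists_walk_contractImage (U := Set.univ)
    (fun _ _ _ _ _ _ _ => trivial) (Set.mem_univ v) (Set.mem_univ w)
  exact ⟨W.map (contractImage H C _).hom, (Walk.length_map _ _).trans_le hW⟩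

theorem dist_contractEdges_mk (h : IsCoordClass H φ i C) (v w : V) :
    (contractEdges H C).dist (Quot.mk _ v) (Quot.mk _ w) =
      hammingDist (dropCoord i (φ v)) (dropCoord i (φ w)) := by
  obtain ⟨ψ, -, hψ⟩ := h.exists_injective_coords
  obtain ⟨W, hW⟩ := h.exists_walk_contractEdges v w
  rw [← hψ, ← hψ] at hW ⊢
  exact dist_eq_hammingDist_of_walk ψ
    (fun _ _ => hammingDist_le_one_of_contractEdges_adj h.hammingDist_eq hψ) W hW

theorem isPartialCube_contractEdges (h : IsCoordClass H φ i C) :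
    IsPartialCube (contractEdges H C) := by
  obtain ⟨ψ, hψinj, hψ⟩ := h.exists_injective_coords
  refine ⟨(connected_iff _).2 ⟨?_, h.connected.nonempty.map (Quot.mk _)⟩, d, ψ, hψinj, ?_⟩
  · rintro ⟨v⟩ ⟨w⟩
    exact ⟨(h.exists_walk_contractEdges v w).choose⟩
  · rintro ⟨v⟩ ⟨w⟩
    rw [hypercubeGraph_dist, h.dist_contractEdges_mk, hψ, hψ]

theorem isIsometricSubgraph_contractImage (h : IsCoordClass H φ i C) (b : Bool) :
    IsIsometricSubgraph (contractImage H C {v | φ v i = b}) := by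
  rintro ⟨_, v, hv, rfl⟩ ⟨_, w, hw, rfl⟩
  obtain ⟨ψ, -, hψ⟩ := h.exists_injective_coords
  have hU : ∀ v w v', φ v i = b → φ w i = b → H.Adj v v' → H.dist v' w + 1 = H.dist v w →
      φ v' i = b := fun v w v' hv hw hadj hdist =>
    (coord_eq_of_adj_of_dist_add_one h.hammingDist_eq hadj hdist (hv.trans hw.symm)).trans hv
  obtain ⟨W, hW⟩ := h.exists_walk_contractImage hU hv hw
  rw [h.dist_contractEdges_mk, ← hψ, ← hψ]
  rw [← hψ, ← hψ] at hW
  exact dist_eq_hammingDist_of_walk (ψ ∘ Subtype.val)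
    (fun a b hab => hammingDist_le_one_of_contractEdges_adj h.hammingDist_eq hψ
      (Subgraph.coe_adj_sub _ a b hab)) W hW

theorem nonempty_iso_expansionGraph (h : IsCoordClass H φ i C) :
    Nonempty (H ≃g expansionGraph (contractImage H C {v | φ v i = false})
      (contractImage H C {v | φ v i = false}ᶜ)) := by
  set U := {v | φ v i = false}
  have hinjc := h.injOn_mk true
  rw [show {v | φ v i = true} = Uᶜ by ext; simp [U]] at hinjc
  let e₁ : U ≃ (contractImage H C U).verts := Equiv.Set.imageOfInjOn _ _ (h.injOn_mk false)
  let e₂ : ↥Uᶜ ≃ (contractImage H C Uᶜ).verts := Equiv.Set.imageOfInjOn _ _ hinjc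
  refine ⟨⟨(Equiv.Set.sumCompl U).symm.trans (e₁.sumCongr e₂), fun {v w} => ?_⟩⟩
  by_cases hv : v ∈ U <;> by_cases hw : w ∈ U
  all_goals
    simp only [Equiv.trans_apply, Equiv.Set.sumCompl_symm_apply_of_mem, hv, hw,
      Equiv.Set.sumCompl_symm_apply_of_notMem, not_false_eq_true, Equiv.sumCongr_apply,
      Sum.map_inl, Sum.map_inr, expansionGraph_adj_inl_inl, expansionGraph_adj_inl_inr,
      expansionGraph_adj_inr_inl, expansionGraph_adj_inr_inr]
  · exact (contractImage_adj_mk_iff hv hw).trans (h.contractEdges_adj_mk_iff (hv.trans hw.symm))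
  · exact h.mk_eq_mk_iff_adj fun hvw => hw (hvw.symm.trans hv)
  · exact h.mk_eq_mk_iff_adj fun hvw => hv (hvw.trans hw)
  · refine (contractImage_adj_mk_iff hv hw).trans (h.contractEdges_adj_mk_iff ?_)
    simp only [U, Set.mem_ofPred_eq, Bool.not_eq_false] at hv hw
    exact hv.trans hw.symm

theorem isExpansionOf_contractEdges (h : IsCoordClass H φ i C) {x y : V} (hxy : H.Adj x y)
    (hi : φ x i ≠ φ y i) : IsExpansionOf H (contractEdges H C) := by
  refine ⟨_, _, h.isIsometricSubgraph_contractImage false, ?_,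
    contractImage_sup_compl h.mem_iff, ?_, h.nonempty_iso_expansionGraph⟩
  · rw [show {v | φ v i = false}ᶜ = {v | φ v i = true} by ext; simp]
    exact h.isIsometricSubgraph_contractImage true
  · have hmk : (Quot.mk _ x : Quot fun v w : V => s(v, w) ∈ C) = Quot.mk _ y :=
      Quot.sound ((h.mem_iff x y).2 ⟨hxy, hi⟩)
    by_cases hx : φ x i = false
    · exact ⟨_, ⟨x, hx, rfl⟩, ⟨y, fun hy => hi (hx.trans hy.symm), hmk.symm⟩⟩
    · exact ⟨_, ⟨y, by simpa [hx] using hi.symm, hmk.symm⟩, ⟨x, hx, rfl⟩⟩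

end IsCoordClass

end Contraction

/-- If `H` is a partial cube and `E_f` is a `Θ`-class of `H`, then the graph
`H/E_f` obtained by contracting all edges of `E_f` is a partial cube, and `H`
is an expansion of `H/E_f`. -/
theorem contraction_isPartialCube_and_expansion {V : Type} (H : SimpleGraph V)
    (hH : IsPartialCube H) (C : Set (Sym2 V)) (hC : IsThetaClass H C) :
    IsPartialCube (contractEdges H C) ∧ IsExpansionOf H (contractEdges H C) := by
  obtain ⟨hconn, d, φ, -, hcube⟩ := hH
  have hφ : ∀ v w, hammingDist (φ v) (φ w) = H.dist v w := fun v w => by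
    rw [← hypercubeGraph_dist, hcube]
  obtain ⟨i, x, y, hxy, hi, hCi⟩ := hC.exists_coord hφ
  have h : IsCoordClass H φ i C := ⟨hconn, hφ, hCi⟩
  exact ⟨h.isPartialCube_contractEdges, h.isExpansionOf_contractEdges hxy hi⟩
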